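/- arXiv:1704.00541 — 2 statements merged into one kernel-verified Lean document; each statement's English description precedes it below -/
import Mathlib

section
/- Let B ∈ ℝ^{L×R} be a matrix with full column rank. Then the set E_B = { B(A ⊙ C)^T : A ∈ ℝ^{K×R}, C ∈ ℝ^{M×R} } is a closed subset of the space of real L×KM matrices (with its standard topology). -/
open Matrix

/-- `M` has full column rank: its columns are linearly independent. -/
def HasFullColRank {m n : Type*} [Fintype m] (M : Matrix m n ℝ) : Prop :=
  LinearIndependent ℝ fun j : n => fun i : m => M i j

/-- The Khatri-Rao (columnwise Kronecker) product. -/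
def khatriRao {K M R : ℕ} (A : Matrix (Fin K) (Fin R) ℝ) (C : Matrix (Fin M) (Fin R) ℝ) :
    Matrix (Fin K × Fin M) (Fin R) ℝ :=
  fun p r => A p.1 r * C p.2 r

/-- The range of the Khatri-Rao product is exactly the set of matrices each of whose
columns, viewed as a `K × M` matrix, has all `2 × 2` minors vanishing. -/
lemma khatriRao_range_eq {K M R : ℕ} :
    {Y : Matrix (Fin K × Fin M) (Fin R) ℝ | ∃ A C, Y = khatriRao A C} =
    {Y | ∀ r k k' m m', Y (k, m) r * Y (k', m') r = Y (k, m') r * Y (k', m) r} := by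
  ext Y
  constructor
  · rintro ⟨A, C, rfl⟩ r k k' m m'
    simp only [khatriRao]
    ring
  · intro hY
    have key : ∀ r : Fin R, ∃ (a : Fin K → ℝ) (c : Fin M → ℝ),
        ∀ k m, Y (k, m) r = a k * c m := by
      intro r
      by_cases h : ∀ p : Fin K × Fin M, Y p r = 0
      · exact ⟨0, 0, fun k m => by simp [h (k, m)]⟩
      · push_neg at h
        obtain ⟨⟨k0, m0⟩, hp0⟩ := h
        refine ⟨fun k => Y (k, m0) r, fun m => Y (k0, m) r / Y (k0, m0) r, fun k m => ?_⟩
        have h1 := hY r k k0 m m0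
        field_simp
        linear_combination h1
    choose a c hac using key
    exact ⟨fun k r => a r k, fun m r => c r m, by
      funext p r; exact hac r p.1 p.2⟩

theorem unfolding_set_isClosed {K L M R : ℕ}
    (B : Matrix (Fin L) (Fin R) ℝ) (hB : HasFullColRank B) :
    IsClosed {X : Matrix (Fin L) (Fin K × Fin M) ℝ |
      ∃ (A : Matrix (Fin K) (Fin R) ℝ) (C : Matrix (Fin M) (Fin R) ℝ),
        X = B * (khatriRao A C)ᵀ} := by
  classical
  -- the linear map Y ↦ B * Yᵀ
  let φ : Matrix (Fin K × Fin M) (Fin R) ℝ →ₗ[ℝ] Matrix (Fin L) (Fin K × Fin M) ℝ :=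
    { toFun := fun Y => B * Yᵀ
      map_add' := fun Y Z => by simp [Matrix.transpose_add, Matrix.mul_add]
      map_smul' := fun t Y => by simp [Matrix.transpose_smul, Matrix.mul_smul] }
  have hker : ∀ Y, φ Y = 0 → Y = 0 := by
    intro Y hY
    funext p r
    have h0 : ∀ l, ∑ s, Y p s • B l s = 0 := by
      intro l
      have := congrFun (congrFun hY l) p
      simpa [φ, Matrix.mul_apply, mul_comm] using this
    have := Fintype.linearIndependent_iff.mp hB (fun s => Y p s)
      (by funext l; simpa using h0 l) r
    simpa using this
  have hinj : Function.Injective φ :=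
    LinearMap.ker_eq_bot.mp (LinearMap.ker_eq_bot'.mpr hker)
  have hce := LinearMap.isClosedEmbedding_of_injective (f := φ) (LinearMap.ker_eq_bot'.mpr hker)
  -- the closed set of column-rank-one matrices
  set S : Set (Matrix (Fin K × Fin M) (Fin R) ℝ) :=
    {Y | ∀ r k k' m m', Y (k, m) r * Y (k', m') r = Y (k, m') r * Y (k', m) r} with hSdef
  have hS : IsClosed S := by
    have : S = ⋂ (r : Fin R) (k : Fin K) (k' : Fin K) (m : Fin M) (m' : Fin M),
        {Y : Matrix (Fin K × Fin M) (Fin R) ℝ |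
          Y (k, m) r * Y (k', m') r = Y (k, m') r * Y (k', m) r} := by
      ext Y
      simp [hSdef, Set.mem_iInter]
    rw [this]
    refine isClosed_iInter fun r => isClosed_iInter fun k => isClosed_iInter fun k' =>
      isClosed_iInter fun m => isClosed_iInter fun m' => ?_
    have hcont : ∀ (p : Fin K × Fin M),
        Continuous fun Y : Matrix (Fin K × Fin M) (Fin R) ℝ => Y p r :=
      fun p => (continuous_apply r).comp (continuous_apply p)
    exact isClosed_eq (((hcont (k, m)).mul (hcont (k', m'))))
      (((hcont (k, m')).mul (hcont (k', m))))
  have himg : {X : Matrix (Fin L) (Fin K × Fin M) ℝ |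
      ∃ (A : Matrix (Fin K) (Fin R) ℝ) (C : Matrix (Fin M) (Fin R) ℝ),
        X = B * (khatriRao A C)ᵀ} = φ '' S := by
    rw [hSdef, ← khatriRao_range_eq]
    ext X
    constructor
    · rintro ⟨A, C, rfl⟩
      exact ⟨khatriRao A C, ⟨A, C, rfl⟩, rfl⟩
    · rintro ⟨Y, ⟨A, C, rfl⟩, rfl⟩
      exact ⟨A, C, rfl⟩
  rw [himg]
  exact hce.isClosedMap S hS
end

section
/- Let A ∈ ℝ^{K×R} be a matrix with no zero column and let C ∈ ℝ^{M×R} be a matrix with full column rank. Then the Khatri-Rao product A ⊙ C ∈ ℝ^{KM×R} has full column rank. -/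
open Matrix

theorem khatriRao_full_column_rank {K M R : ℕ}
    (A : Matrix (Fin K) (Fin R) ℝ) (hA : ∀ r, (fun k => A k r) ≠ 0)
    (C : Matrix (Fin M) (Fin R) ℝ) (hC : HasFullColRank C) :
    HasFullColRank (khatriRao A C) := by
  rw [HasFullColRank, Fintype.linearIndependent_iff]
  intro g hg r
  obtain ⟨k, hk⟩ : ∃ k, A k r ≠ 0 := by
    by_contra h
    push_neg at h
    exact hA r (funext fun k => h k)
  have hC' := (Fintype.linearIndependent_iff.mp hC) (fun s => g s * A k s) ?_ r
  · exact (mul_eq_zero.mp hC').resolve_right hk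
  · funext m
    have := congrFun hg (k, m)
    simp only [Finset.sum_apply, Pi.smul_apply, khatriRao, smul_eq_mul, Pi.zero_apply] at this ⊢
    rw [← this]
    ring_nf
end
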